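/- Soundness and completeness of the tableau calculus DF/TTt: for every finite set Γ of formulae and every formula A, Γ ⊢_DF/TTt A if and only if Γ ⊨_DF/TT A. -/
import Mathlib


inductive Formula : Type
  | var : Nat → Formula
  | neg : Formula → Formula
  | conj : Formula → Formula → Formula
  | impl : Formula → Formula → Formula
deriving DecidableEq

inductive TV : Type
  | zero
  | half
  | one
deriving DecidableEq

/-- Strong Kleene negation: 0↦1, ½↦½, 1↦0. -/
def tneg : TV → TV
  | .zero => .one
  | .half => .half
  | .one => .zero

/-- min on {0,½,1}. -/
def tmin : TV → TV → TV
  | .zero, _ => .zero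
  | .half, .zero => .zero
  | .half, .half => .half
  | .half, .one => .half
  | .one, b => b

/-- Designated values: ½ and 1. -/
def designated (x : TV) : Prop := x = TV.half ∨ x = TV.one

/-- The de Finetti conditional table: f_DF(x,y) = y if x = 1, and ½ if x ∈ {0,½}. -/
def fDF : TV → TV → TV
  | .one, b => b
  | .zero, _ => .half
  | .half, _ => .half

/-- A DF-evaluation. -/
def IsDFEval (v : Formula → TV) : Prop :=
  (∀ A, v (.neg A) = tneg (v A)) ∧
  (∀ A B, v (.conj A B) = tmin (v A) (v B)) ∧
  (∀ A B, v (.impl A B) = fDF (v A) (v B))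

/-- TT-validity: Γ ⊨_DF/TT A. -/
def DFConsequence (Γ : Set Formula) (A : Formula) : Prop :=
  ∀ v : Formula → TV, IsDFEval v → (∀ B ∈ Γ, designated (v B)) → designated (v A)

/-- Signed formulae A : n. -/
abbrev SForm := Formula × TV

/-- The branch alternatives produced by applying the tableau rule to a signed formula:
each element of the list is one way of extending the current branch. -/
def ruleChildren : SForm → List (List SForm)
  | (.var _, _) => [[]]
  | (.neg A, .one) => [[(A, .zero)]]
  | (.neg A, .zero) => [[(A, .one)]]
  | (.neg A, .half) => [[(A, .half)]]
  | (.conj A B, .one) => [[(A, .one), (B, .one)]]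
  | (.conj A B, .zero) => [[(A, .zero)], [(B, .zero)]]
  | (.conj A B, .half) =>
      [[(A, .one), (B, .half)], [(A, .half), (B, .half)], [(A, .half), (B, .one)]]
  | (.impl A B, .one) => [[(A, .one), (B, .one)]]
  | (.impl A B, .zero) => [[(A, .one), (B, .zero)]]
  | (.impl A B, .half) => [[(A, .zero)], [(A, .half)], [(B, .half)]]

/-- A set of signed formulae is saturated (completed) if every rule has been applied
exhaustively along it: for each signed formula, some branch alternative is included. -/
def Saturated (T : Set SForm) : Prop :=
  ∀ s ∈ T, ∃ c ∈ ruleChildren s, ∀ x ∈ c, x ∈ T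

/-- A branch is open if no formula occurs signed with two distinct values. -/
def OpenBranch (T : Set SForm) : Prop :=
  ∀ A m n, (A, m) ∈ T → (A, n) ∈ T → m = n

/-- `IsBranch S T`: T is (the set of signed formulae on) a branch of the completed
tableau with root S: it contains S, is saturated, and every signed formula on it
either belongs to the root or is introduced by a rule applied to a formula on it. -/
def IsBranch (S T : Set SForm) : Prop :=
  S ⊆ T ∧ Saturated T ∧ ∀ s ∈ T, s ∈ S ∨ ∃ t ∈ T, ∃ c ∈ ruleChildren t, s ∈ c

/-- The completed tableau with root S is closed iff all of its branches are closed. -/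
def TableauClosed (S : Set SForm) : Prop :=
  ∀ T, IsBranch S T → ¬ OpenBranch T

/-- The root labelled B : g B for each B ∈ Γ. -/
def rootSet (Γ : Finset Formula) (g : Formula → TV) : Set SForm :=
  {s | ∃ B ∈ Γ, s = (B, g B)}

/-- Tableau derivability: Γ ⊢ A iff for every assignment of designated values to the
members of Γ, the completed tableau with root Γ (so signed) together with A : 0
is closed. -/
def TabDeriv (Γ : Finset Formula) (A : Formula) : Prop :=
  ∀ g : Formula → TV, (∀ B ∈ Γ, designated (g B)) →
    TableauClosed (rootSet Γ g ∪ {(A, TV.zero)})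

/-- A quasi-evaluation: a functional set of signed formulae that is a proper subset
of (the graph of) some evaluation; in particular it is partial and non-total. -/
def IsQuasiDFEval (G : Set SForm) : Prop :=
  (∀ A m n, (A, m) ∈ G → (A, n) ∈ G → m = n) ∧
  ∃ v : Formula → TV, IsDFEval v ∧ (∀ p ∈ G, v p.1 = p.2) ∧ ∃ A, (A, v A) ∉ G

/-! ### Auxiliary material -/

/-- Canonical evaluation determined by an assignment to the variables. -/
def evalF (u : Nat → TV) : Formula → TV
  | .var p => u p
  | .neg A => tneg (evalF u A)
  | .conj A B => tmin (evalF u A) (evalF u B)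
  | .impl A B => fDF (evalF u A) (evalF u B)

lemma evalF_isDFEval (u : Nat → TV) : IsDFEval (evalF u) :=
  ⟨fun _ => rfl, fun _ _ => rfl, fun _ _ => rfl⟩

lemma mem_graph (v : Formula → TV) (A : Formula) (m : TV) (h : v A = m) :
    (A, m) ∈ {p : SForm | v p.1 = p.2} := h

lemma all_mem_single (v : Formula → TV) (A : Formula) (m : TV) (h : v A = m) :
    ∀ x ∈ [(A, m)], x ∈ {p : SForm | v p.1 = p.2} := by
  intro x hx; simp only [List.mem_singleton] at hx; subst hx; exact h

lemma all_mem_pair (v : Formula → TV) (A B : Formula) (m n : TV)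
    (hA : v A = m) (hB : v B = n) :
    ∀ x ∈ [(A, m), (B, n)], x ∈ {p : SForm | v p.1 = p.2} := by
  intro x hx
  simp only [List.mem_cons, List.mem_singleton, List.not_mem_nil, or_false] at hx
  rcases hx with rfl | rfl
  · exact hA
  · exact hB

lemma graph_saturated (v : Formula → TV) (hv : IsDFEval v) :
    Saturated {p : SForm | v p.1 = p.2} := by
  obtain ⟨hneg, hconj, himpl⟩ := hv
  rintro ⟨F, m⟩ hm
  simp only [Set.mem_setOf_eq] at hm
  subst hm
  cases F with
  | var p => exact ⟨[], by simp [ruleChildren], by simp⟩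
  | neg A =>
      rcases hA : v A with _ | _ | _
      · exact ⟨[(A, .zero)], by simp [ruleChildren, hneg A, hA, tneg],
          all_mem_single v A .zero hA⟩
      · exact ⟨[(A, .half)], by simp [ruleChildren, hneg A, hA, tneg],
          all_mem_single v A .half hA⟩
      · exact ⟨[(A, .one)], by simp [ruleChildren, hneg A, hA, tneg],
          all_mem_single v A .one hA⟩
  | conj A B =>
      rcases hA : v A with _ | _ | _ <;> rcases hB : v B with _ | _ | _
      · exact ⟨[(A, .zero)], by simp [ruleChildren, hconj A B, hA, hB, tmin],
          all_mem_single v A .zero hA⟩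
      · exact ⟨[(A, .zero)], by simp [ruleChildren, hconj A B, hA, hB, tmin],
          all_mem_single v A .zero hA⟩
      · exact ⟨[(A, .zero)], by simp [ruleChildren, hconj A B, hA, hB, tmin],
          all_mem_single v A .zero hA⟩
      · exact ⟨[(B, .zero)], by simp [ruleChildren, hconj A B, hA, hB, tmin],
          all_mem_single v B .zero hB⟩
      · exact ⟨[(A, .half), (B, .half)],
          by simp [ruleChildren, hconj A B, hA, hB, tmin],
          all_mem_pair v A B .half .half hA hB⟩
      · exact ⟨[(A, .half), (B, .one)],
          by simp [ruleChildren, hconj A B, hA, hB, tmin],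
          all_mem_pair v A B .half .one hA hB⟩
      · exact ⟨[(B, .zero)], by simp [ruleChildren, hconj A B, hA, hB, tmin],
          all_mem_single v B .zero hB⟩
      · exact ⟨[(A, .one), (B, .half)],
          by simp [ruleChildren, hconj A B, hA, hB, tmin],
          all_mem_pair v A B .one .half hA hB⟩
      · exact ⟨[(A, .one), (B, .one)],
          by simp [ruleChildren, hconj A B, hA, hB, tmin],
          all_mem_pair v A B .one .one hA hB⟩
  | impl A B =>
      rcases hA : v A with _ | _ | _ <;> rcases hB : v B with _ | _ | _
      · exact ⟨[(A, .zero)], by simp [ruleChildren, himpl A B, hA, hB, fDF],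
          all_mem_single v A .zero hA⟩
      · exact ⟨[(A, .zero)], by simp [ruleChildren, himpl A B, hA, hB, fDF],
          all_mem_single v A .zero hA⟩
      · exact ⟨[(A, .zero)], by simp [ruleChildren, himpl A B, hA, hB, fDF],
          all_mem_single v A .zero hA⟩
      · exact ⟨[(A, .half)], by simp [ruleChildren, himpl A B, hA, hB, fDF],
          all_mem_single v A .half hA⟩
      · exact ⟨[(A, .half)], by simp [ruleChildren, himpl A B, hA, hB, fDF],
          all_mem_single v A .half hA⟩
      · exact ⟨[(A, .half)], by simp [ruleChildren, himpl A B, hA, hB, fDF],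
          all_mem_single v A .half hA⟩
      · exact ⟨[(A, .one), (B, .zero)],
          by simp [ruleChildren, himpl A B, hA, hB, fDF],
          all_mem_pair v A B .one .zero hA hB⟩
      · exact ⟨[(B, .half)], by simp [ruleChildren, himpl A B, hA, hB, fDF],
          all_mem_single v B .half hB⟩
      · exact ⟨[(A, .one), (B, .one)],
          by simp [ruleChildren, himpl A B, hA, hB, fDF],
          all_mem_pair v A B .one .one hA hB⟩

lemma graph_origin (v : Formula → TV) (hv : IsDFEval v) (S : Set SForm) :
    ∀ s ∈ {p : SForm | v p.1 = p.2}, s ∈ S ∨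
      ∃ t ∈ {p : SForm | v p.1 = p.2}, ∃ c ∈ ruleChildren t, s ∈ c := by
  obtain ⟨hneg, _, _⟩ := hv
  rintro ⟨F, m⟩ hm
  simp only [Set.mem_setOf_eq] at hm
  subst hm
  right
  refine ⟨(Formula.neg F, v (Formula.neg F)), rfl, ?_⟩
  rcases hF : v F with _ | _ | _ <;>
    simp [ruleChildren, hneg F, hF, tneg]

lemma hintikka (T : Set SForm) (hS : Saturated T) (hO : OpenBranch T) :
    ∃ v : Formula → TV, IsDFEval v ∧ ∀ B m, (B, m) ∈ T → v B = m := by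
  classical
  set u : Nat → TV := fun p =>
    if h : ∃ m, (Formula.var p, m) ∈ T then h.choose else TV.half with hu
  refine ⟨evalF u, evalF_isDFEval u, ?_⟩
  intro B
  induction B with
  | var p =>
      intro m hm
      have h : ∃ m, (Formula.var p, m) ∈ T := ⟨m, hm⟩
      have : evalF u (Formula.var p) = h.choose := by
        simp [evalF, hu, dif_pos h]
      rw [this]
      exact hO _ _ _ h.choose_spec hm
  | neg A ih =>
      intro m hm
      obtain ⟨c, hc, hall⟩ := hS _ hm
      cases m with
      | zero =>
          simp only [ruleChildren, List.mem_singleton] at hc; subst hc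
          have h1 := ih TV.one (hall (A, TV.one) (by simp))
          simp [evalF, h1, tneg]
      | half =>
          simp only [ruleChildren, List.mem_singleton] at hc; subst hc
          have h1 := ih TV.half (hall (A, TV.half) (by simp))
          simp [evalF, h1, tneg]
      | one =>
          simp only [ruleChildren, List.mem_singleton] at hc; subst hc
          have h1 := ih TV.zero (hall (A, TV.zero) (by simp))
          simp [evalF, h1, tneg]
  | conj A B ihA ihB =>
      intro m hm
      obtain ⟨c, hc, hall⟩ := hS _ hm
      cases m with
      | one =>
          simp only [ruleChildren, List.mem_singleton] at hc; subst hc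
          have h1 := ihA TV.one (hall (A, TV.one) (by simp))
          have h2 := ihB TV.one (hall (B, TV.one) (by simp))
          simp [evalF, h1, h2, tmin]
      | zero =>
          simp only [ruleChildren, List.mem_cons, List.mem_singleton,
            List.not_mem_nil, or_false] at hc
          rcases hc with hc | hc <;> subst hc
          · have h1 := ihA TV.zero (hall (A, TV.zero) (by simp))
            rcases hB : evalF u B with _ | _ | _ <;> simp [evalF, h1, hB, tmin]
          · have h2 := ihB TV.zero (hall (B, TV.zero) (by simp))
            rcases hA : evalF u A with _ | _ | _ <;> simp [evalF, h2, hA, tmin]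
      | half =>
          simp only [ruleChildren, List.mem_cons, List.mem_singleton,
            List.not_mem_nil, or_false] at hc
          rcases hc with hc | hc | hc <;> subst hc
          · have h1 := ihA TV.one (hall (A, TV.one) (by simp))
            have h2 := ihB TV.half (hall (B, TV.half) (by simp))
            simp [evalF, h1, h2, tmin]
          · have h1 := ihA TV.half (hall (A, TV.half) (by simp))
            have h2 := ihB TV.half (hall (B, TV.half) (by simp))
            simp [evalF, h1, h2, tmin]
          · have h1 := ihA TV.half (hall (A, TV.half) (by simp))
            have h2 := ihB TV.one (hall (B, TV.one) (by simp))
            simp [evalF, h1, h2, tmin]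
  | impl A B ihA ihB =>
      intro m hm
      obtain ⟨c, hc, hall⟩ := hS _ hm
      cases m with
      | one =>
          simp only [ruleChildren, List.mem_singleton] at hc; subst hc
          have h1 := ihA TV.one (hall (A, TV.one) (by simp))
          have h2 := ihB TV.one (hall (B, TV.one) (by simp))
          simp [evalF, h1, h2, fDF]
      | zero =>
          simp only [ruleChildren, List.mem_singleton] at hc; subst hc
          have h1 := ihA TV.one (hall (A, TV.one) (by simp))
          have h2 := ihB TV.zero (hall (B, TV.zero) (by simp))
          simp [evalF, h1, h2, fDF]
      | half =>
          simp only [ruleChildren, List.mem_cons, List.mem_singleton,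
            List.not_mem_nil, or_false] at hc
          rcases hc with hc | hc | hc <;> subst hc
          · have h1 := ihA TV.zero (hall (A, TV.zero) (by simp))
            simp [evalF, h1, fDF]
          · have h1 := ihA TV.half (hall (A, TV.half) (by simp))
            simp [evalF, h1, fDF]
          · have h2 := ihB TV.half (hall (B, TV.half) (by simp))
            rcases hA : evalF u A with _ | _ | _ <;> simp [evalF, h2, hA, fDF]

/-- Soundness and completeness of the tableau calculus DF/TTt: for every finite set
Γ of formulae and every formula A, Γ ⊢_DF/TTt A if and only if Γ ⊨_DF/TT A. -/
theorem dfttt_soundness_completeness (Γ : Finset Formula) (A : Formula) :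
    TabDeriv Γ A ↔ DFConsequence (↑Γ) A := by
  constructor
  · -- soundness
    intro hTab v hv hΓ
    by_contra hA
    have hA0 : v A = TV.zero := by
      rcases h : v A with _ | _ | _
      · rfl
      · exact absurd (Or.inl h) hA
      · exact absurd (Or.inr h) hA
    have hclosed := hTab v hΓ
    set T : Set SForm := {p : SForm | v p.1 = p.2} with hT
    have hbranch : IsBranch (rootSet Γ v ∪ {(A, TV.zero)}) T := by
      refine ⟨?_, graph_saturated v hv, ?_⟩
      · rintro s (hs | hs)
        · obtain ⟨B, _, rfl⟩ := hs
          exact rfl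
        · simp only [Set.mem_singleton_iff] at hs
          subst hs
          exact hA0
      · intro s hs
        rcases graph_origin v hv (rootSet Γ v ∪ {(A, TV.zero)}) s hs with h | h
        · exact Or.inl h
        · exact Or.inr h
    exact hclosed T hbranch (fun B m n hm hn => by
      simp only [hT, Set.mem_setOf_eq] at hm hn
      rw [← hm, ← hn])
  · -- completeness
    intro hCons g hg T hT hOpen
    obtain ⟨v, hv, hval⟩ := hintikka T hT.2.1 hOpen
    have hroot : ∀ s ∈ rootSet Γ g ∪ {(A, TV.zero)}, s ∈ T := fun s hs => hT.1 hs
    have hdes : ∀ B ∈ (↑Γ : Set Formula), designated (v B) := by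
      intro B hB
      have : (B, g B) ∈ T := hroot _ (Or.inl ⟨B, hB, rfl⟩)
      rw [hval _ _ this]
      exact hg B hB
    have hAval : v A = TV.zero :=
      hval _ _ (hroot _ (Or.inr rfl))
    have := hCons v hv hdes
    rw [hAval] at this
    rcases this with h | h <;> exact TV.noConfusion h
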